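/- For all natural numbers n > 1, the sum over k from 1 to n of (-1)^k·C(n,k)·k·H_k² equals 1/(1-n)·(H_n - (n²+3n-2)/(n(n-1))). -/

import Mathlib

/-!
Write `S f n = ∑_{k ≤ n} (-1)^k C(n,k) f k`. Pascal's rule gives `S f (n+1) = -S (Δf) n` for the
forward difference `Δf k = f (k+1) - f k`, and the absorption identity
`C(n,k) / (k+1) = C(n+1,k+1) / (n+1)` expresses `S (k ↦ g (k+1) / (k+1)) n` through `S g (n+1)`.
Since `Δ(k H_k²) = H_k² + 2 H_k + 1/(k+1)` and `Δ(H_k²) = 2 H_{k+1}/(k+1) - 1/(k+1)²`, the sum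
reduces to the transforms of `1/(k+1)`, `H_k`, `1/(k+1)²` and `H_{k+1}/(k+1)`, which follow from
these two rules.
-/

open Finset BigOperators

def H (n : ℕ) : ℚ := ∑ i ∈ Finset.range n, 1 / (i + 1 : ℚ)

def H2 (n : ℕ) : ℚ := ∑ i ∈ Finset.range n, 1 / ((i + 1 : ℚ))^2

def altBinomSum {R : Type*} [CommRing R] (f : ℕ → R) (n : ℕ) : R :=
  ∑ k ∈ range (n + 1), (-1) ^ k * n.choose k * f k

namespace altBinomSum

section CommRing

variable {R : Type*} [CommRing R] (f g : ℕ → R) (n : ℕ)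

lemma sub : altBinomSum (fun k => f k - g k) n = altBinomSum f n - altBinomSum g n := by
  simp only [altBinomSum, ← sum_sub_distrib, mul_sub]

lemma add : altBinomSum (fun k => f k + g k) n = altBinomSum f n + altBinomSum g n := by
  simp only [altBinomSum, ← sum_add_distrib, mul_add]

lemma const_mul (c : R) : altBinomSum (fun k => c * f k) n = c * altBinomSum f n := by
  simp only [altBinomSum, mul_sum]
  exact sum_congr rfl fun k _ => by ring

lemma eq_sum_Icc (hf : f 0 = 0) :
    altBinomSum f n = ∑ k ∈ Icc 1 n, (-1) ^ k * n.choose k * f k := by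
  rw [altBinomSum, range_eq_Ico, sum_eq_sum_Ico_succ_bot n.succ_pos, hf, mul_zero, zero_add,
    zero_add, Nat.succ_eq_add_one, Ico_add_one_right_eq_Icc]

lemma succ : altBinomSum f (n + 1) = altBinomSum f n - altBinomSum (fun k => f (k + 1)) n := by
  have pascal : ∀ k ∈ range (n + 1), (-1 : R) ^ (k + 1) * ((n + 1).choose (k + 1) : R) * f (k + 1)
      = (-1) ^ (k + 1) * n.choose (k + 1) * f (k + 1) - (-1) ^ k * n.choose k * f (k + 1) := by
    intro k _
    rw [Nat.choose_succ_succ, Nat.cast_add]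
    ring
  have shifted : altBinomSum f n
      = f 0 + ∑ k ∈ range (n + 1), (-1 : R) ^ (k + 1) * n.choose (k + 1) * f (k + 1) := by
    rw [altBinomSum, sum_range_succ', sum_range_succ _ n]
    simp [add_comm]
  rw [altBinomSum, sum_range_succ', sum_congr rfl pascal, sum_sub_distrib, shifted, altBinomSum]
  simp only [pow_zero, Nat.choose_zero_right, Nat.cast_one, one_mul]
  ring

lemma succ_eq_neg_sub :
    altBinomSum f (n + 1) = -altBinomSum (fun k => f (k + 1) - f k) n := by
  rw [succ, sub]
  ring

lemma one_succ : altBinomSum (fun _ => (1 : R)) (n + 1) = 0 := by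
  rw [succ_eq_neg_sub]
  simp [altBinomSum]

end CommRing

variable {K : Type*} [Field K] [CharZero K]

lemma div_succ (g : ℕ → K) (n : ℕ) :
    altBinomSum (fun k => g (k + 1) / (k + 1)) n = (g 0 - altBinomSum g (n + 1)) / (n + 1) := by
  have absorb : ∀ k ∈ range (n + 1), (-1 : K) ^ k * n.choose k * (g (k + 1) / (k + 1))
      = -((-1) ^ (k + 1) * ((n + 1).choose (k + 1) : K) * g (k + 1)) / (n + 1) := by
    intro k _
    have h : ((n + 1 : ℕ) : K) * n.choose k = (n + 1).choose (k + 1) * (k + 1 : ℕ) := by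
      exact_mod_cast Nat.add_one_mul_choose_eq n k
    push_cast at h
    field_simp
    linear_combination (-1 : K) ^ k * g (k + 1) * h
  rw [altBinomSum, sum_congr rfl absorb, ← sum_div, sum_neg_distrib, altBinomSum,
    sum_range_succ' _ (n + 1)]
  simp

lemma one_div_succ (n : ℕ) : altBinomSum (fun k : ℕ => (1 : K) / (k + 1)) n = 1 / (n + 1) := by
  simpa [one_succ] using div_succ (fun _ => (1 : K)) n

end altBinomSum

lemma H_zero : H 0 = 0 := by
  simp [H]

lemma H_succ (n : ℕ) : H (n + 1) = H n + 1 / (n + 1) := by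
  rw [H, sum_range_succ, ← H]

-- The `k = 0` term vanishes because `1 / 0 = 0`.
lemma altBinomSum_one_div (n : ℕ) : altBinomSum (fun k : ℕ => (1 : ℚ) / k) n = -H n := by
  induction n with
  | zero => simp [altBinomSum, H_zero]
  | succ n ih =>
    rw [altBinomSum.succ, ih, H_succ]
    push_cast
    rw [altBinomSum.one_div_succ]
    ring

lemma altBinomSum_H_succ (n : ℕ) : altBinomSum H (n + 1) = -(1 / (n + 1)) := by
  simp only [altBinomSum.succ_eq_neg_sub, H_succ, add_sub_cancel_left, altBinomSum.one_div_succ]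

lemma altBinomSum_one_div_succ_sq (n : ℕ) :
    altBinomSum (fun k : ℕ => (1 : ℚ) / (k + 1) ^ 2) n = H (n + 1) / (n + 1) := by
  have h : (fun k : ℕ => (1 : ℚ) / (k + 1) ^ 2) = fun k => 1 / ((k + 1 : ℕ) : ℚ) / (k + 1) := by
    funext k
    push_cast
    field_simp
  rw [h, altBinomSum.div_succ (fun k : ℕ => (1 : ℚ) / k), altBinomSum_one_div]
  simp

lemma altBinomSum_H_succ_div_succ (n : ℕ) :
    altBinomSum (fun k => H (k + 1) / (k + 1)) n = 1 / (n + 1) ^ 2 := by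
  rw [altBinomSum.div_succ, altBinomSum_H_succ, H_zero]
  field_simp
  ring

lemma altBinomSum_H_sq_succ (n : ℕ) :
    altBinomSum (fun k => H k ^ 2) (n + 1) = H (n + 1) / (n + 1) - 2 / (n + 1) ^ 2 := by
  have diff : ∀ k : ℕ, H (k + 1) ^ 2 - H k ^ 2 = 2 * (H (k + 1) / (k + 1)) - 1 / (k + 1) ^ 2 := by
    intro k
    rw [H_succ]
    field_simp
    ring
  rw [altBinomSum.succ_eq_neg_sub, funext diff, altBinomSum.sub, altBinomSum.const_mul,
    altBinomSum_H_succ_div_succ, altBinomSum_one_div_succ_sq]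
  ring

lemma altBinomSum_natCast_mul_H_sq (n : ℕ) :
    altBinomSum (fun k : ℕ => k * H k ^ 2) (n + 2)
      = -(H (n + 1) / (n + 1) - 2 / (n + 1) ^ 2 - 2 / (n + 1) + 1 / (n + 2)) := by
  have diff : ∀ k : ℕ, ((k + 1 : ℕ) : ℚ) * H (k + 1) ^ 2 - k * H k ^ 2
      = H k ^ 2 + 2 * H k + 1 / (k + 1) := by
    intro k
    rw [H_succ]
    push_cast
    field_simp
    ring
  rw [altBinomSum.succ_eq_neg_sub, funext diff, altBinomSum.add, altBinomSum.add,
    altBinomSum.const_mul, altBinomSum_H_sq_succ, altBinomSum_H_succ, altBinomSum.one_div_succ]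
  push_cast
  ring

theorem stmt18 (n : ℕ) (hn : 1 < n) :
    ∑ k ∈ Finset.Icc 1 n, (-1 : ℚ)^k * (n.choose k : ℚ) * k * H k^2
      = 1 / (1 - (n : ℚ)) * (H n - ((n : ℚ)^2 + 3 * n - 2) / (n * ((n : ℚ) - 1))) := by
  obtain ⟨m, rfl⟩ : ∃ m, n = m + 2 := ⟨n - 2, by omega⟩
  have hsum : ∑ k ∈ Icc 1 (m + 2), (-1 : ℚ) ^ k * ((m + 2).choose k : ℚ) * k * H k ^ 2
      = altBinomSum (fun k : ℕ => k * H k ^ 2) (m + 2) := by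
    rw [altBinomSum.eq_sum_Icc _ _ (by simp)]
    simp only [mul_assoc]
  rw [hsum, altBinomSum_natCast_mul_H_sq, H_succ (m + 1)]
  push_cast
  have hm : (1 : ℚ) - (m + 2) ≠ 0 := by linarith [(m.cast_nonneg : (0 : ℚ) ≤ m)]
  have hm' : (m : ℚ) + 2 - 1 ≠ 0 := by linarith [(m.cast_nonneg : (0 : ℚ) ≤ m)]
  field_simp
  ring
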